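/- Consider the external contextual grammar over {a,b} with the single selection pair ({a,b}*·{a}, {(b,ε)}) and axioms {ε, a}. Its generated language is L = {b^n a : n ≥ 0} ∪ {ε}, and L cannot be generated by any external contextual grammar all of whose selection languages are prefix-closed. -/

import Mathlib

/-- An external contextual grammar: a finite list of selection pairs
(selection language, finite list of contexts) and a finite list of axioms. -/
structure ECG (α : Type*) where
  pairs : List (Set (List α) × List (List α × List α))
  axioms : List (List α)

/-- Every context `(u, v)` satisfies `uv ≠ ε`. -/
def ECG.WellFormed {α : Type*} (G : ECG α) : Prop :=
  ∀ p ∈ G.pairs, ∀ c ∈ p.2, c.1 ++ c.2 ≠ []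

/-- External derivation step: `x ⟹ u x v` for a context `(u,v)` of a pair
whose selection language contains `x`. -/
def ECG.Step {α : Type*} (G : ECG α) (x y : List α) : Prop :=
  ∃ p ∈ G.pairs, x ∈ p.1 ∧ ∃ c ∈ p.2, y = c.1 ++ x ++ c.2

/-- The language generated externally: all words derivable from the axioms. -/
def ECG.lang {α : Type*} (G : ECG α) : Set (List α) :=
  { w | ∃ x ∈ G.axioms, Relation.ReflTransGen G.Step x w }

def PrefixClosed {α : Type*} (L : Set (List α)) : Prop :=
  ∀ x y : List α, x ++ y ∈ L → x ∈ L

/-!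
The grammar only ever prepends `b` to a word ending in `a`, so it generates exactly `b*a ∪ {ε}`.
Conversely, suppose a grammar with prefix-closed selection languages generates this language.
A long word `bᴺa` is neither an axiom nor a bare context `uv`, so it arises as `u (bʲa) v` from a
nonempty word `bʲa` of some selection language; counting `a`s shows that `uv` contains no `a`.
By prefix-closure that selection language also contains `ε ∈ L`, so `uv` is generated as well;
being nonempty it must contain an `a`.
-/

namespace ECG

variable {α : Type*} (G : ECG α)

theorem mem_lang_of_mem_axioms {x : List α} (hx : x ∈ G.axioms) : x ∈ G.lang :=
  ⟨x, hx, .refl⟩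

theorem mem_lang_of_step {x y : List α} (hx : x ∈ G.lang) (hxy : G.Step x y) : y ∈ G.lang :=
  let ⟨x₀, hx₀, hder⟩ := hx
  ⟨x₀, hx₀, hder.tail hxy⟩

theorem lang_subset_of_closed {S : Set (List α)} (haxioms : ∀ x ∈ G.axioms, x ∈ S)
    (hstep : ∀ x y, x ∈ S → G.Step x y → y ∈ S) : G.lang ⊆ S := by
  rintro w ⟨x₀, hx₀, hder⟩
  induction hder with
  | refl => exact haxioms x₀ hx₀
  | tail _ hxy ih => exact hstep _ _ ih hxy

def contextWords : List (List α) :=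
  G.pairs.flatMap fun p => p.2.map fun c => c.1 ++ c.2

theorem exists_step_of_mem_lang {w : List α} (hw : w ∈ G.lang) (hax : w ∉ G.axioms)
    (hctx : w ∉ G.contextWords) :
    ∃ x ∈ G.lang, x ≠ [] ∧ ∃ p ∈ G.pairs, x ∈ p.1 ∧ ∃ c ∈ p.2, w = c.1 ++ x ++ c.2 := by
  obtain ⟨x₀, hx₀, hder⟩ := hw
  rcases hder.cases_tail with rfl | ⟨x, hx, p, hp, hxp, c, hc, rfl⟩
  · exact absurd hx₀ hax
  refine ⟨x, ⟨x₀, hx₀, hx⟩, ?_, p, hp, hxp, c, hc, rfl⟩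
  rintro rfl
  exact hctx (List.mem_flatMap.2 ⟨p, hp, List.mem_map.2 ⟨c, hc, by simp⟩⟩)

theorem context_mem_lang_of_prefixClosed {p : Set (List α) × List (List α × List α)}
    (hp : p ∈ G.pairs) (hpc : PrefixClosed p.1) {x : List α} (hx : x ∈ p.1)
    (hnil : [] ∈ G.lang) {c : List α × List α} (hc : c ∈ p.2) : c.1 ++ c.2 ∈ G.lang :=
  G.mem_lang_of_step hnil ⟨p, hp, hpc [] x hx, c, hc, by simp⟩

end ECG

section BPowA

open ECG

variable {α : Type*} (a b : α)

def bPowALang : Set (List α) :=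
  { w | ∃ n : ℕ, w = List.replicate n b ++ [a] } ∪ {[]}

def bPowAGrammar : ECG α :=
  ⟨[({ w | ∃ u : List α, (∀ c ∈ u, c = a ∨ c = b) ∧ w = u ++ [a] }, [([b], [])])], [[], [a]]⟩

variable {a b}

theorem bPowAGrammar_wellFormed : (bPowAGrammar a b).WellFormed := by
  simp [WellFormed, bPowAGrammar]

theorem bPowAGrammar_step_iff {x y : List α} :
    (bPowAGrammar a b).Step x y ↔
      (∃ u : List α, (∀ c ∈ u, c = a ∨ c = b) ∧ x = u ++ [a]) ∧ y = b :: x := by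
  simp [Step, bPowAGrammar]

theorem replicate_append_mem_lang_bPowAGrammar (n : ℕ) :
    List.replicate n b ++ [a] ∈ (bPowAGrammar a b).lang := by
  induction n with
  | zero => exact mem_lang_of_mem_axioms _ (by simp [bPowAGrammar])
  | succ n ih =>
    refine mem_lang_of_step _ ih (bPowAGrammar_step_iff.2 ⟨?_, rfl⟩)
    exact ⟨List.replicate n b, fun c hc => .inr (List.eq_of_mem_replicate hc), rfl⟩

theorem bPowAGrammar_lang : (bPowAGrammar a b).lang = bPowALang a b := by
  apply Set.Subset.antisymm
  · refine lang_subset_of_closed _ (by simp [bPowAGrammar, bPowALang]) ?_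
    rintro x y (⟨n, rfl⟩ | rfl) hxy <;> obtain ⟨⟨u, -, hu⟩, rfl⟩ := bPowAGrammar_step_iff.1 hxy
    · exact .inl ⟨n + 1, rfl⟩
    · simp at hu
  · rintro w (⟨n, rfl⟩ | rfl)
    · exact replicate_append_mem_lang_bPowAGrammar n
    · exact mem_lang_of_mem_axioms _ (by simp [bPowAGrammar])

theorem count_eq_one_of_mem_bPowALang [DecidableEq α] (hab : a ≠ b) {w : List α}
    (hw : w ∈ bPowALang a b) (hne : w ≠ []) : w.count a = 1 := by
  rcases hw with ⟨n, rfl⟩ | rfl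
  · simp [List.count_replicate, hab.symm]
  · exact absurd rfl hne

theorem not_exists_prefixClosed_lang_eq_bPowALang (hab : a ≠ b) :
    ¬ ∃ G : ECG α, G.WellFormed ∧ (∀ p ∈ G.pairs, PrefixClosed p.1) ∧ G.lang = bPowALang a b := by
  classical
  rintro ⟨G, hwf, hpc, hlang⟩
  have hinf : (Set.range fun n => List.replicate n b ++ [a]).Infinite :=
    Set.infinite_range_of_injective fun m n h => by simpa using h
  obtain ⟨_, ⟨N, rfl⟩, hshort⟩ :=
    hinf.exists_notMem_finset (G.axioms ++ G.contextWords).toFinset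
  simp only [List.mem_toFinset, List.mem_append, not_or] at hshort
  have hw : List.replicate N b ++ [a] ∈ G.lang := hlang ▸ .inl ⟨N, rfl⟩
  obtain ⟨x, hx, hxne, p, hp, hxp, c, hc, hwx⟩ :=
    G.exists_step_of_mem_lang hw hshort.1 hshort.2
  have hcount : (c.1 ++ c.2).count a = 0 := by
    have hw1 := count_eq_one_of_mem_bPowALang hab (w := List.replicate N b ++ [a]) (.inl ⟨N, rfl⟩)
      (by simp)
    have hx1 := count_eq_one_of_mem_bPowALang hab (hlang ▸ hx) hxne
    rw [hwx, List.count_append, List.count_append] at hw1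
    rw [List.count_append]
    omega
  have hctx : c.1 ++ c.2 ∈ G.lang :=
    G.context_mem_lang_of_prefixClosed hp (hpc p hp) hxp (hlang ▸ .inr rfl) hc
  have := count_eq_one_of_mem_bPowALang hab (hlang ▸ hctx) (hwf p hp c hc)
  omega

end BPowA

theorem stmt_14 {α : Type*} (a b : α) (hab : a ≠ b)
    (G : ECG α)
    (hG : G = ⟨[({ w | ∃ u : List α, (∀ c ∈ u, c = a ∨ c = b) ∧ w = u ++ [a] },
                  [([b], [])])],
               [[], [a]]⟩)
    (L : Set (List α))
    (hL : L = { w | ∃ n : ℕ, w = List.replicate n b ++ [a] } ∪ {[]}) :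
    G.WellFormed ∧ G.lang = L ∧
    ¬ ∃ G' : ECG α, G'.WellFormed ∧ (∀ p ∈ G'.pairs, PrefixClosed p.1) ∧
      G'.lang = L := by
  subst hG hL
  exact ⟨bPowAGrammar_wellFormed, bPowAGrammar_lang, not_exists_prefixClosed_lang_eq_bPowALang hab⟩
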